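/- If the confounding relation on H = G[An(Y)] is empty (no unobserved confounders among ancestors of Y) and no element of Y is an ancestor of another element of Y, then MUCT(G, Y) = Y and the interventional border IB(G, Y) = pa(Y)_G \ Y equals pa(Y)_G. -/

import Mathlib

variable {V : Type*}

/-- Ancestors of `Y` in `G` (including `Y` itself). -/
def An (Adj : V → V → Prop) (Y : Set V) : Set V :=
  {v | ∃ y ∈ Y, Relation.ReflTransGen Adj v y}

/-- Edges of the induced subgraph `H = G[An(Y)]`. -/
def AdjH (Adj : V → V → Prop) (Y : Set V) (u v : V) : Prop :=
  Adj u v ∧ u ∈ An Adj Y ∧ v ∈ An Adj Y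

/-- Confounding relation restricted to `H = G[An(Y)]`. -/
def ConfH (Adj Conf : V → V → Prop) (Y : Set V) (u v : V) : Prop :=
  Conf u v ∧ u ∈ An Adj Y ∧ v ∈ An Adj Y

/-- Descendants (including the set itself) of `T` within `H = G[An(Y)]`. -/
def De (Adj : V → V → Prop) (Y T : Set V) : Set V :=
  {v ∈ An Adj Y | ∃ t ∈ T, Relation.ReflTransGen (AdjH Adj Y) t v}

/-- Closure of `T` under connectivity via the confounding relation in `H`. -/
def CC (Adj Conf : V → V → Prop) (Y T : Set V) : Set V :=
  {v ∈ An Adj Y | ∃ t ∈ T, Relation.ReflTransGen (ConfH Adj Conf Y) t v}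

/-- A UC-territory for `(G, Y)`. -/
def UCTerritory (Adj Conf : V → V → Prop) (Y T : Set V) : Prop :=
  Y ⊆ T ∧ De Adj Y T = T ∧ CC Adj Conf Y T = T

/-- Parents of a set of vertices. -/
def Pa (Adj : V → V → Prop) (T : Set V) : Set V :=
  {v | ∃ t ∈ T, Adj v t}

theorem subset_An (Adj : V → V → Prop) (Y : Set V) : Y ⊆ An Adj Y :=
  fun y hy => ⟨y, hy, .refl⟩

theorem De_self_eq_of_forall_not_transGen {Adj : V → V → Prop} {Y : Set V}
    (hY : ∀ y₁ ∈ Y, ∀ y₂ ∈ Y, ¬ Relation.TransGen Adj y₁ y₂) : De Adj Y Y = Y := by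
  refine Set.Subset.antisymm ?_ fun y hy => ⟨subset_An Adj Y hy, y, hy, .refl⟩
  rintro v ⟨⟨y, hy, hvy⟩, t, ht, htv⟩
  rcases Relation.reflTransGen_iff_eq_or_transGen.mp htv with rfl | htv
  · exact ht
  · have htv' : Relation.TransGen Adj t v := Relation.TransGen.mono (fun _ _ h => h.1) _ _ htv
    exact (hY t ht y hy (htv'.trans_left hvy)).elim

theorem CC_eq_inter_An_of_forall_not_conf {Adj Conf : V → V → Prop} {Y : Set V}
    (hconf : ∀ u v : V, u ∈ An Adj Y → v ∈ An Adj Y → ¬ Conf u v) (T : Set V) :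
    CC Adj Conf Y T = T ∩ An Adj Y := by
  have hConfH : ∀ u v, ¬ ConfH Adj Conf Y u v := fun u v h => hconf u v h.2.1 h.2.2 h.1
  ext v
  refine ⟨?_, fun ⟨hv, hvAn⟩ => ⟨hvAn, v, hv, .refl⟩⟩
  rintro ⟨hvAn, t, ht, htv⟩
  rcases htv.cases_tail with rfl | ⟨w, -, hwv⟩
  · exact ⟨ht, hvAn⟩
  · exact absurd hwv (hConfH w v)

theorem Pa_diff_self_eq_of_forall_not_transGen {Adj : V → V → Prop} {Y : Set V}
    (hY : ∀ y₁ ∈ Y, ∀ y₂ ∈ Y, ¬ Relation.TransGen Adj y₁ y₂) : Pa Adj Y \ Y = Pa Adj Y :=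
  sdiff_eq_left.mpr <| Set.disjoint_left.mpr fun v ⟨y, hy, hvy⟩ hv => hY v hv y hy (.single hvy)

theorem muct_eq_targets_of_no_confounders_general (Adj Conf : V → V → Prop)
    (hacyc : ∀ v : V, ¬ Relation.TransGen Adj v v)
    (Y : Set V)
    (hconf : ∀ u v : V, u ∈ An Adj Y → v ∈ An Adj Y → ¬ Conf u v)
    (hnoanc : ∀ y₁ ∈ Y, ∀ y₂ ∈ Y, y₁ ≠ y₂ → ¬ Relation.TransGen Adj y₁ y₂) :
    (UCTerritory Adj Conf Y Y ∧
      ∀ T : Set V, UCTerritory Adj Conf Y T → Y ⊆ T) ∧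
    Pa Adj Y \ Y = Pa Adj Y := by
  have hY : ∀ y₁ ∈ Y, ∀ y₂ ∈ Y, ¬ Relation.TransGen Adj y₁ y₂ := fun y₁ h₁ y₂ h₂ => by
    rcases eq_or_ne y₁ y₂ with rfl | hne
    exacts [hacyc y₁, hnoanc y₁ h₁ y₂ h₂ hne]
  have hCC : CC Adj Conf Y Y = Y := by
    rw [CC_eq_inter_An_of_forall_not_conf hconf, Set.inter_eq_left.mpr (subset_An Adj Y)]
  exact ⟨⟨⟨subset_rfl, De_self_eq_of_forall_not_transGen hY, hCC⟩, fun _ hT => hT.1⟩,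
    Pa_diff_self_eq_of_forall_not_transGen hY⟩

theorem muct_eq_targets_of_no_confounders [Fintype V] (Adj Conf : V → V → Prop)
    (hsymm : Symmetric Conf) (hacyc : ∀ v : V, ¬ Relation.TransGen Adj v v)
    (Y : Set V)
    (hconf : ∀ u v : V, u ∈ An Adj Y → v ∈ An Adj Y → ¬ Conf u v)
    (hnoanc : ∀ y₁ ∈ Y, ∀ y₂ ∈ Y, y₁ ≠ y₂ → ¬ Relation.TransGen Adj y₁ y₂) :
    (UCTerritory Adj Conf Y Y ∧
      ∀ T : Set V, UCTerritory Adj Conf Y T → Y ⊆ T) ∧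
    Pa Adj Y \ Y = Pa Adj Y :=
  muct_eq_targets_of_no_confounders_general Adj Conf hacyc Y hconf hnoanc
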